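/- arXiv:1901.04044 — 2 statements merged into one kernel-verified Lean document; each statement's English description precedes it below -/
import Mathlib

section
/- For all n ≥ 1, ∑_{k=1}^{n} c_k²/(2k+1) ≤ 1; in particular c_n² ≤ 2n+1 for all n. -/
/-!
The numbers `∑ⱼ ∑ₖ aⱼ aₖ / (j + k + 1)` are the values `∫₀¹ p²` of the Hilbert-matrix quadratic
form on `p = ∑ₖ aₖ xᵏ`, hence nonnegative. For `p = pₙ = ∑_{k ≤ n} cₖ xᵏ` the recurrence says that
`c_{n+1} x^{n+1}` is orthogonal to `p_{n+1}`, so `‖p_{n+1}‖² = ‖pₙ‖² - c_{n+1}² / (2n + 3)`, and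
therefore `0 ≤ ‖pₙ‖² = 1 - ∑_{k=1}^n cₖ² / (2k + 1)`.
-/

open Finset

theorem integral_sq_sum_monomials (a : ℕ → ℝ) (s : Finset ℕ) :
    ∫ x in (0 : ℝ)..1, (∑ k ∈ s, a k * x ^ k) ^ 2
      = ∑ j ∈ s, ∑ k ∈ s, a j * a k / ((j : ℝ) + k + 1) := by
  have hexpand : ∀ x : ℝ, (∑ k ∈ s, a k * x ^ k) ^ 2
      = ∑ j ∈ s, ∑ k ∈ s, a j * a k * x ^ (j + k) := fun x => by
    rw [sq, sum_mul_sum]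
    exact sum_congr rfl fun j _ => sum_congr rfl fun k _ => by ring
  simp only [hexpand]
  rw [intervalIntegral.integral_finsetSum fun j _ =>
    (continuous_finsetSum s fun k _ => by fun_prop).intervalIntegrable 0 1]
  refine sum_congr rfl fun j _ => ?_
  rw [intervalIntegral.integral_finsetSum fun k _ =>
    (by fun_prop : Continuous fun x : ℝ => a j * a k * x ^ (j + k)).intervalIntegrable 0 1]
  refine sum_congr rfl fun k _ => ?_
  rw [intervalIntegral.integral_const_mul, integral_pow]
  push_cast
  ring

def hilbertForm (a : ℕ → ℚ) (n : ℕ) : ℚ :=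
  ∑ j ∈ range (n + 1), ∑ k ∈ range (n + 1), a j * a k / ((j : ℚ) + k + 1)

theorem hilbertForm_nonneg (a : ℕ → ℚ) (n : ℕ) : 0 ≤ hilbertForm a n := by
  have hreal : ((hilbertForm a n : ℚ) : ℝ)
      = ∫ x in (0 : ℝ)..1, (∑ k ∈ range (n + 1), (a k : ℝ) * x ^ k) ^ 2 := by
    rw [integral_sq_sum_monomials]
    push_cast [hilbertForm]
    rfl
  have : (0 : ℝ) ≤ hilbertForm a n := by
    rw [hreal]
    exact intervalIntegral.integral_nonneg zero_le_one fun x _ => sq_nonneg _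
  exact_mod_cast this

theorem hilbertForm_succ (a : ℕ → ℚ) (n : ℕ) :
    hilbertForm a (n + 1) = hilbertForm a n
      + 2 * a (n + 1) * ∑ k ∈ range (n + 2), a k / (((n + 1 : ℕ) : ℚ) + 1 + k)
      - a (n + 1) ^ 2 / (2 * ((n + 1 : ℕ) : ℚ) + 1) := by
  simp only [hilbertForm, sum_range_succ (n := n + 1), sum_add_distrib]
  have hcross : ∀ j ∈ range (n + 1), a j * a (n + 1) / ((j : ℚ) + ((n + 1 : ℕ) : ℚ) + 1)
      = a (n + 1) * (a j / (((n + 1 : ℕ) : ℚ) + 1 + j)) := fun j _ => by ring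
  have hcross' : ∀ k ∈ range (n + 1), a (n + 1) * a k / (((n + 1 : ℕ) : ℚ) + k + 1)
      = a (n + 1) * (a k / (((n + 1 : ℕ) : ℚ) + 1 + k)) := fun k _ => by ring
  rw [sum_congr rfl hcross, sum_congr rfl hcross', ← mul_sum]
  have : (2 * ((n + 1 : ℕ) : ℚ) + 1) ≠ 0 := by positivity
  field_simp
  push_cast
  ring

theorem hilbertForm_eq_one_sub_sum (c : ℕ → ℚ) (hc0 : c 0 = 1)
    (hrec : ∀ n : ℕ, 1 ≤ n →
      ∑ k ∈ range (n + 1), c k / ((n : ℚ) + 1 + (k : ℚ)) = 0) (n : ℕ) :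
    hilbertForm c n = 1 - ∑ k ∈ Icc 1 n, c k ^ 2 / (2 * (k : ℚ) + 1) := by
  induction n with
  | zero => simp [hilbertForm, hc0]
  | succ n ih =>
    rw [hilbertForm_succ, hrec (n + 1) n.succ_pos, ih, sum_Icc_succ_top (by omega)]
    ring

theorem sum_squares_bound (c : ℕ → ℚ)
    (hc0 : c 0 = 1)
    (hrec : ∀ n : ℕ, 1 ≤ n →
      ∑ k ∈ Finset.range (n + 1), c k / ((n : ℚ) + 1 + (k : ℚ)) = 0) :
    (∀ n : ℕ, 1 ≤ n →
      ∑ k ∈ Finset.Icc 1 n, (c k) ^ 2 / (2 * (k : ℚ) + 1) ≤ 1) ∧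
    (∀ n : ℕ, (c n) ^ 2 ≤ 2 * (n : ℚ) + 1) := by
  have hsum : ∀ n : ℕ, ∑ k ∈ Icc 1 n, c k ^ 2 / (2 * (k : ℚ) + 1) ≤ 1 := fun n => by
    linarith [hilbertForm_nonneg c n, hilbertForm_eq_one_sub_sum c hc0 hrec n]
  refine ⟨fun n _ => hsum n, fun n => ?_⟩
  rcases Nat.eq_zero_or_pos n with rfl | hn
  · simp [hc0]
  · have hterm : c n ^ 2 / (2 * (n : ℚ) + 1) ≤ ∑ k ∈ Icc 1 n, c k ^ 2 / (2 * (k : ℚ) + 1) :=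
      single_le_sum (f := fun k => c k ^ 2 / (2 * (k : ℚ) + 1))
        (fun k _ => by positivity) (mem_Icc.mpr ⟨hn, le_rfl⟩)
    exact (div_le_one (by positivity)).mp (hterm.trans (hsum n))
end

section
/- For all n ≥ 1, s_n² ≤ D(n)/(2n+3), where s_n = ∑_{k=0}^n c_k and D(n) = ∫_0^1 p_n'(x)² dx. -/
/-!
Since `∑ c_k/(n+1+k) = 0`, the moment `∫₀¹ x^(n+1) p_n'(x) dx = ∑ k c_k/(n+1+k)` equals
`∑ c_k - (n+1) ∑ c_k/(n+1+k) = s_n`. Cauchy–Schwarz against `x^(n+1)`, whose square has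
integral `1/(2n+3)`, gives `s_n² ≤ D(n)/(2n+3)`.
-/

open intervalIntegral Finset

theorem sq_integral_mul_le_integral_sq_mul_integral_sq {f g : ℝ → ℝ} {a b : ℝ} (hab : a ≤ b)
    (hf : IntervalIntegrable (fun x => f x ^ 2) MeasureTheory.volume a b)
    (hg : IntervalIntegrable (fun x => g x ^ 2) MeasureTheory.volume a b)
    (hfg : IntervalIntegrable (fun x => f x * g x) MeasureTheory.volume a b) :
    (∫ x in a..b, f x * g x) ^ 2 ≤ (∫ x in a..b, f x ^ 2) * ∫ x in a..b, g x ^ 2 := by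
  have hquad : ∀ t : ℝ, 0 ≤ (∫ x in a..b, f x ^ 2) * (t * t)
      + (2 * ∫ x in a..b, f x * g x) * t + ∫ x in a..b, g x ^ 2 := by
    intro t
    have hexpand : ∀ x, (t * f x + g x) ^ 2 = t * t * f x ^ 2 + 2 * t * (f x * g x) + g x ^ 2 :=
      fun x => by ring
    have hnonneg : 0 ≤ ∫ x in a..b, (t * f x + g x) ^ 2 :=
      integral_nonneg hab fun x _ => sq_nonneg _
    rw [integral_congr fun x _ => hexpand x, integral_add ((hf.const_mul _).add (hfg.const_mul _)) hg,
      integral_add (hf.const_mul _) (hfg.const_mul _), integral_const_mul, integral_const_mul]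
      at hnonneg
    linarith
  have := discrim_le_zero hquad
  rw [discrim] at this
  linarith

theorem integral_pow_mul_coeff_mul_pow_sub_one (m k : ℕ) (a : ℝ) :
    ∫ x in (0:ℝ)..1, x ^ m * (a * k * x ^ (k - 1)) = a * k / (m + k) := by
  cases k with
  | zero => simp
  | succ k =>
    have hmul : ∀ x : ℝ, x ^ m * (a * (k + 1 : ℕ) * x ^ k) = a * (k + 1 : ℕ) * x ^ (m + k) :=
      fun x => by ring
    simp only [Nat.add_sub_cancel, integral_congr fun x _ => hmul x, integral_const_mul,
      integral_pow]
    push_cast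
    ring

theorem integral_pow_mul_sum_coeff_mul_pow_sub_one (m n : ℕ) (a : ℕ → ℝ) :
    ∫ x in (0:ℝ)..1, x ^ m * ∑ k ∈ range n, a k * k * x ^ (k - 1)
      = ∑ k ∈ range n, a k * k / (m + k) := by
  simp only [mul_sum]
  rw [integral_finsetSum fun k _ => by apply Continuous.intervalIntegrable; fun_prop]
  exact sum_congr rfl fun k _ => integral_pow_mul_coeff_mul_pow_sub_one m k (a k)

theorem sum_mul_div_add_eq_sum_sub {K : Type*} [Field K] (s : Finset ℕ) (a : ℕ → K) (N : K)
    (hN : ∀ k ∈ s, N + k ≠ 0) :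
    ∑ k ∈ s, a k * k / (N + k) = ∑ k ∈ s, a k - N * ∑ k ∈ s, a k / (N + k) := by
  rw [mul_sum, ← sum_sub_distrib]
  refine sum_congr rfl fun k hk => ?_
  field_simp [hN k hk]
  ring

theorem partial_sum_sq_le_general (c : ℕ → ℚ)
    (hrec : ∀ n : ℕ, 1 ≤ n →
      ∑ k ∈ Finset.range (n + 1), c k / ((n : ℚ) + 1 + (k : ℚ)) = 0) :
    ∀ n : ℕ, 1 ≤ n →
      (∑ k ∈ Finset.range (n + 1), (c k : ℝ)) ^ 2 ≤
        (∫ x in (0:ℝ)..1,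
          (∑ k ∈ Finset.range (n + 1), (c k : ℝ) * (k : ℝ) * x ^ (k - 1)) ^ 2) /
          (2 * (n : ℝ) + 3) := by
  intro n hn
  set g : ℝ → ℝ := fun x => ∑ k ∈ range (n + 1), (c k : ℝ) * k * x ^ (k - 1)
  have horth : ∑ k ∈ range (n + 1), (c k : ℝ) / ((n + 1 : ℝ) + k) = 0 := by
    exact_mod_cast hrec n hn
  have hmoment : ∫ x in (0:ℝ)..1, x ^ (n + 1) * g x = ∑ k ∈ range (n + 1), (c k : ℝ) := by
    rw [integral_pow_mul_sum_coeff_mul_pow_sub_one, Nat.cast_succ,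
      sum_mul_div_add_eq_sum_sub _ _ _ fun k _ => by positivity, horth, mul_zero, sub_zero]
  have hpow : ∫ x in (0:ℝ)..1, (x ^ (n + 1)) ^ 2 = 1 / (2 * n + 3) := by
    simp only [← pow_mul, integral_pow]
    push_cast
    ring
  have hcs := sq_integral_mul_le_integral_sq_mul_integral_sq (f := fun x => x ^ (n + 1)) (g := g)
    zero_le_one (by apply Continuous.intervalIntegrable; fun_prop)
    (by apply Continuous.intervalIntegrable; fun_prop)
    (by apply Continuous.intervalIntegrable; fun_prop)
  rw [hmoment, hpow] at hcs
  rwa [div_mul_eq_mul_div, one_mul] at hcs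

theorem partial_sum_sq_le (c : ℕ → ℚ)
    (hc0 : c 0 = 1)
    (hrec : ∀ n : ℕ, 1 ≤ n →
      ∑ k ∈ Finset.range (n + 1), c k / ((n : ℚ) + 1 + (k : ℚ)) = 0) :
    ∀ n : ℕ, 1 ≤ n →
      (∑ k ∈ Finset.range (n + 1), (c k : ℝ)) ^ 2 ≤
        (∫ x in (0:ℝ)..1,
          (∑ k ∈ Finset.range (n + 1), (c k : ℝ) * (k : ℝ) * x ^ (k - 1)) ^ 2) /
          (2 * (n : ℝ) + 3) :=
  partial_sum_sq_le_general c hrec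
end
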